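/- For α > 0 and for the optimal α-fair allocation y*_i = d_i^{(1−α)/α}/∑_k d_k^{(1−α)/α}, the resulting per-user throughputs D_i = y*_i d_i satisfy: when α = 1 they are proportional to d_i with equal shares y*_i = 1/|I|, and as α → ∞ the allocation y*_i converges to the max-min allocation in the sense that D_i = y*_i d_i → (∑_k 1/d_k)^{−1}, equalizing all throughputs. -/
import Mathlib


open Filter

/-- throughputs of the optimal α-fair allocation
`y*_α i = d i ^ ((1-α)/α) / ∑ k, d k ^ ((1-α)/α)`. For `α = 1` the shares are
equal, `y*_1 i = 1 / |I|`, so throughputs are proportional to `d i`; and as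
`α → ∞` each throughput `y*_α i * d i` converges to `(∑ k, (d k)⁻¹)⁻¹`,
equalizing all throughputs (the max-min limit). -/
theorem alpha_fair_limits {I : Type*} [Fintype I] [Nonempty I]
    (d : I → ℝ) (hd : ∀ i, 0 < d i)
    (ystar : ℝ → I → ℝ)
    (hy : ystar = fun α i => d i ^ ((1 - α) / α) / ∑ k, d k ^ ((1 - α) / α)) :
    (∀ i, ystar 1 i = (Fintype.card I : ℝ)⁻¹ ∧
        ystar 1 i * d i = d i / (Fintype.card I : ℝ)) ∧
      ∀ i, Tendsto (fun α : ℝ => ystar α i * d i) atTop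
        (nhds ((∑ k, (d k)⁻¹)⁻¹)) := by
  subst hy
  have hsum : (0:ℝ) < ∑ k, (d k)⁻¹ :=
    Finset.sum_pos (fun k _ => inv_pos.2 (hd k)) Finset.univ_nonempty
  constructor
  · intro i
    have h1 : ∀ k : I, d k ^ ((1 - (1:ℝ)) / 1) = 1 := by intro k; norm_num
    refine ⟨?_, ?_⟩ <;> simp only [h1] <;> simp [Finset.card_univ] <;> ring
  · intro i
    have ht : Tendsto (fun α : ℝ => (1 - α) / α) atTop (nhds (-1)) := by
      have heq : (fun α : ℝ => (1 - α) / α) =ᶠ[atTop] fun α => α⁻¹ - 1 := by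
        filter_upwards [eventually_ne_atTop (0 : ℝ)] with α hα
        field_simp
      rw [tendsto_congr' heq]
      have h0 : Tendsto (fun α : ℝ => α⁻¹) atTop (nhds 0) :=
        tendsto_inv_atTop_zero
      simpa using h0.sub tendsto_const_nhds
    have hbase : ∀ k : I, Tendsto (fun α : ℝ => d k ^ ((1 - α) / α)) atTop
        (nhds ((d k)⁻¹)) := by
      intro k
      have := (tendsto_const_nhds : Tendsto (fun _ : ℝ => d k) atTop (nhds (d k))).rpow
        ht (Or.inl (hd k).ne')
      simpa [Real.rpow_neg_one] using this
    have hS : Tendsto (fun α : ℝ => ∑ k, d k ^ ((1 - α) / α)) atTop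
        (nhds (∑ k, (d k)⁻¹)) := by
      exact tendsto_finset_sum _ (fun k _ => hbase k)
    have h := ((hbase i).div hS hsum.ne').mul
      (tendsto_const_nhds : Tendsto (fun _ : ℝ => d i) atTop (nhds (d i)))
    have : (d i)⁻¹ / (∑ k, (d k)⁻¹) * d i = (∑ k, (d k)⁻¹)⁻¹ := by
      rw [div_mul_eq_mul_div, inv_mul_cancel₀ (hd i).ne', one_div]
    simpa [this] using h
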